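/- arXiv:1305.6015 — 6 statements merged into one kernel-verified Lean document; each statement's English description precedes it below -/
import Mathlib

section
/- For every integer k ≥ 1 and every positive integer n, λ_k(n) equals the sum of μ(n / d^{k+1}) over all positive integers d such that d^{k+1} divides n, where the sum is over divisors d with n/d^{k+1} squarefree contributing μ of the quotient. -/
/-- The Liouville function of order `k`, defined multiplicatively by
`λ_k(p^m) = 1` if `m ≡ 0 [MOD k+1]`, `-1` if `m ≡ 1 [MOD k+1]`, `0` otherwise. -/
def lamK (k n : ℕ) : ℤ :=
  if n = 0 then 0 else
    ∏ p ∈ n.primeFactors,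
      (if n.factorization p % (k + 1) = 0 then 1
       else if n.factorization p % (k + 1) = 1 then -1 else 0)

open Finset ArithmeticFunction

/-- Generic multiplicative-type function built from exponents. -/
def mkMult (F : ℕ → ℤ) : ArithmeticFunction ℤ :=
  ⟨fun n => if n = 0 then 0 else ∏ p ∈ n.primeFactors, F (n.factorization p), by simp⟩

lemma mkMult_apply (F : ℕ → ℤ) (n : ℕ) (hn : n ≠ 0) :
    mkMult F n = ∏ p ∈ n.primeFactors, F (n.factorization p) := by
  simp [mkMult, hn]

lemma mkMult_isMult (F : ℕ → ℤ) : (mkMult F).IsMultiplicative := by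
  refine ⟨by simp [mkMult], ?_⟩
  intro m n hmn
  rcases eq_or_ne m 0 with rfl | hm
  · simp [mkMult]
  rcases eq_or_ne n 0 with rfl | hn
  · simp [mkMult]
  rw [mkMult_apply _ _ (Nat.mul_ne_zero hm hn), mkMult_apply _ _ hm, mkMult_apply _ _ hn,
    hmn.primeFactors_mul,
    Finset.prod_union (Nat.Coprime.disjoint_primeFactors hmn)]
  congr 1
  · refine Finset.prod_congr rfl fun p hp => ?_
    congr 1
    rw [Nat.factorization_mul hm hn]
    have : n.factorization p = 0 := by
      refine Nat.factorization_eq_zero_of_not_dvd fun hdvd => ?_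
      have hpm : p ∣ m := Nat.dvd_of_mem_primeFactors hp
      have : p = 1 := Nat.eq_one_of_dvd_one (hmn ▸ Nat.dvd_gcd hpm hdvd)
      exact (Nat.prime_of_mem_primeFactors hp).one_lt.ne' this
    simp [this]
  · refine Finset.prod_congr rfl fun p hp => ?_
    congr 1
    rw [Nat.factorization_mul hm hn]
    have : m.factorization p = 0 := by
      refine Nat.factorization_eq_zero_of_not_dvd fun hdvd => ?_
      have hpn : p ∣ n := Nat.dvd_of_mem_primeFactors hp
      have : p = 1 := Nat.eq_one_of_dvd_one (hmn ▸ Nat.dvd_gcd hdvd hpn)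
      exact (Nat.prime_of_mem_primeFactors hp).one_lt.ne' this
    simp [this]

lemma mkMult_prime_pow (F : ℕ → ℤ) {p : ℕ} (hp : p.Prime) {j : ℕ} (hj : j ≠ 0) :
    mkMult F (p ^ j) = F j := by
  rw [mkMult_apply _ _ (pow_ne_zero _ hp.pos.ne')]
  rw [Nat.primeFactors_pow _ hj, Nat.Prime.primeFactors hp]
  rw [Finset.prod_singleton, hp.factorization_pow, Finsupp.single_eq_same]

lemma pow_iff (K d : ℕ) (hd : d ≠ 0) :
    (∀ p ∈ d.primeFactors, K ∣ d.factorization p) ↔ ∃ e, e ^ K = d := by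
  constructor
  · intro h
    refine ⟨d.factorization.prod (fun p a => p ^ (a / K)), ?_⟩
    conv_rhs => rw [← Nat.factorization_prod_pow_eq_self hd]
    rw [Finsupp.prod, Finsupp.prod, ← Finset.prod_pow]
    refine Finset.prod_congr rfl fun p hp => ?_
    rw [← pow_mul, Nat.div_mul_cancel (h p (by rwa [Nat.support_factorization] at hp))]
  · rintro ⟨e, rfl⟩ p _
    rw [Nat.factorization_pow]
    exact Dvd.intro _ rfl

lemma mod_eq_one_iff (K m : ℕ) (hK : 2 ≤ K) : (m + 1) % K = 1 ↔ K ∣ m := by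
  constructor
  · intro h
    have := Nat.div_add_mod (m + 1) K
    exact ⟨(m + 1) / K, by omega⟩
  · rintro ⟨q, rfl⟩
    rw [Nat.mul_add_mod]
    exact Nat.mod_eq_of_lt hK

theorem lamK_eq_sum_moebius (k : ℕ) (hk : 1 ≤ k) (n : ℕ) (hn : 0 < n) :
    lamK k n =
      ∑ d ∈ Finset.Icc 1 n,
        (if d ^ (k + 1) ∣ n
         then ArithmeticFunction.moebius (n / d ^ (k + 1)) else 0) := by
  set K := k + 1 with hKdef
  have hK2 : 2 ≤ K := by omega
  set L : ArithmeticFunction ℤ :=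
    mkMult (fun a => if a % K = 0 then 1 else if a % K = 1 then -1 else 0) with hL
  set g : ArithmeticFunction ℤ := mkMult (fun a => if K ∣ a then 1 else 0) with hg
  have hgpp : ∀ p : ℕ, p.Prime → ∀ j : ℕ, g (p ^ j) = if K ∣ j then 1 else 0 := by
    intro p hp j
    rcases eq_or_ne j 0 with rfl | hj
    · simp [hg, (mkMult_isMult _).map_one]
    · rw [hg, mkMult_prime_pow _ hp hj]
  have hLlam : ∀ m : ℕ, lamK k m = L m := by
    intro m
    rcases eq_or_ne m 0 with rfl | hm
    · simp [lamK, hL, mkMult]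
    · rw [lamK, if_neg hm, hL, mkMult_apply _ _ hm]
  have key : L = ArithmeticFunction.moebius * g := by
    rw [ArithmeticFunction.IsMultiplicative.eq_iff_eq_on_prime_powers _ (mkMult_isMult _) _
      (ArithmeticFunction.isMultiplicative_moebius.mul (mkMult_isMult _))]
    intro p i hp
    have hppos : 0 < p := hp.pos
    rw [ArithmeticFunction.mul_apply, Nat.sum_divisorsAntidiagonal'
      (f := fun a b => (ArithmeticFunction.moebius a : ℤ) * g b),
      Nat.sum_divisors_prime_pow hp]
    have hdiv : ∀ j ∈ Finset.range (i + 1),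
        (ArithmeticFunction.moebius (p ^ i / p ^ j) : ℤ) * g (p ^ j)
          = (ArithmeticFunction.moebius (p ^ (i - j)) : ℤ) * g (p ^ j) := by
      intro j hj
      rw [Nat.pow_div (Nat.lt_succ_iff.mp (Finset.mem_range.mp hj)) hppos]
    rw [Finset.sum_congr rfl hdiv]
    rcases i with _ | m
    · simp [hL, hg, (mkMult_isMult _).map_one, hgpp p hp 0]
    rw [Finset.sum_range_succ, Finset.sum_range_succ]
    have hzero : ∑ j ∈ Finset.range m,
        (ArithmeticFunction.moebius (p ^ (m + 1 - j)) : ℤ) * g (p ^ j) = 0 := by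
      refine Finset.sum_eq_zero fun j hj => ?_
      have hjm : j < m := Finset.mem_range.mp hj
      rw [ArithmeticFunction.moebius_apply_prime_pow hp (by omega), if_neg (by omega)]
      simp
    rw [hzero, zero_add]
    have h1 : (m + 1 - m) = 1 := by omega
    have h0 : (m + 1 - (m + 1)) = 0 := by omega
    rw [h1, h0, pow_one, pow_zero,
      ArithmeticFunction.moebius_apply_prime hp,
      ArithmeticFunction.moebius_apply_one,
      hgpp p hp, hgpp p hp]
    rw [mkMult_prime_pow _ hp (Nat.succ_ne_zero m)]
    by_cases hd1 : K ∣ (m + 1) <;> by_cases hd2 : K ∣ m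
    · exfalso
      have hd : K ∣ 1 := by
        have := Nat.dvd_sub hd1 hd2
        simpa using this
      have := Nat.le_of_dvd one_pos hd
      omega
    · have e1 : (m + 1) % K = 0 := by
        obtain ⟨q, hq⟩ := hd1
        simp [hq, Nat.mul_mod_right]
      simp [e1, hd1, hd2]
    · have e1 : (m + 1) % K = 1 := (mod_eq_one_iff K m hK2).mpr hd2
      rw [e1]
      simp [hd1, hd2]
    · have e0 : (m + 1) % K ≠ 0 := fun h => hd1 (Nat.dvd_of_mod_eq_zero h)
      have e1 : (m + 1) % K ≠ 1 := fun h => hd2 ((mod_eq_one_iff K m hK2).mp h)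
      simp [e0, e1, hd1, hd2]
  rw [hLlam n, key, ArithmeticFunction.mul_apply, Nat.sum_divisorsAntidiagonal'
    (f := fun a b => (ArithmeticFunction.moebius a : ℤ) * g b)]
  have hgval : ∀ d ∈ n.divisors,
      (ArithmeticFunction.moebius (n / d) : ℤ) * g d
        = if ∀ p ∈ d.primeFactors, K ∣ d.factorization p
          then (ArithmeticFunction.moebius (n / d) : ℤ) else 0 := by
    intro d hd
    have hd0 : d ≠ 0 := (Nat.pos_of_mem_divisors hd).ne'
    rw [hg, mkMult_apply _ _ hd0, Finset.prod_boole]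
    simp [mul_ite]
  rw [Finset.sum_congr rfl hgval, ← Finset.sum_filter, ← Finset.sum_filter]
  symm
  refine Finset.sum_bij (fun e _ => e ^ K) ?_ ?_ ?_ ?_
  · intro e he
    obtain ⟨he1, he2⟩ := Finset.mem_filter.mp he
    have he0 : e ≠ 0 := by
      have := (Finset.mem_Icc.mp he1).1
      omega
    refine Finset.mem_filter.mpr ⟨Nat.mem_divisors.mpr ⟨he2, hn.ne'⟩, ?_⟩
    exact (pow_iff K _ (pow_ne_zero _ he0)).mpr ⟨e, rfl⟩
  · intro e1 he1 e2 he2 h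
    exact Nat.pow_left_injective (by omega : K ≠ 0) h
  · intro d hd
    obtain ⟨hdn, hQ⟩ := Finset.mem_filter.mp hd
    have hdvd : d ∣ n := (Nat.mem_divisors.mp hdn).1
    have hd0 : d ≠ 0 := (Nat.pos_of_mem_divisors hdn).ne'
    obtain ⟨e, rfl⟩ := (pow_iff K d hd0).mp hQ
    have he0 : e ≠ 0 := by
      rintro rfl
      exact hd0 (by simp [zero_pow (by omega : K ≠ 0)])
    refine ⟨e, Finset.mem_filter.mpr ⟨Finset.mem_Icc.mpr ⟨by omega, ?_⟩, hdvd⟩, rfl⟩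
    calc e ≤ e ^ K := Nat.le_self_pow (by omega) e
    _ ≤ n := Nat.le_of_dvd hn hdvd
  · intro e he
    rfl
end

section
/- For every integer k ≥ 2, the Dirichlet convolution of the characteristic function q_k of k-free positive integers with the function λ_{k-1} equals the identity element δ of Dirichlet convolution (δ(1) = 1 and δ(n) = 0 for n > 1). Equivalently, q_k is the Dirichlet inverse of λ_{k-1}. -/
open Classical in
/-- Characteristic function of `k`-free positive integers. -/
noncomputable def qK (k n : ℕ) : ℤ :=
  if n ≠ 0 ∧ ∀ p : ℕ, p.Prime → ¬ p ^ k ∣ n then 1 else 0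

open Finset

/-- The value of `lamK` on prime-power exponents. -/
private def gg (k e : ℕ) : ℤ :=
  if e % k = 0 then 1 else if e % k = 1 then -1 else 0

private def HH (k m : ℕ) : ℤ := if m % k = 0 then 1 else 0

private lemma succ_mod (k m : ℕ) (hk : 2 ≤ k) :
    (m + 1) % k = if m % k = k - 1 then 0 else m % k + 1 := by
  have h1 : 1 % k = 1 := Nat.mod_eq_of_lt (by omega)
  have hm : m % k < k := Nat.mod_lt _ (by omega)
  rw [Nat.add_mod, h1]
  split
  · next h =>
      rw [h]
      have hkk : k - 1 + 1 = k := by omega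
      rw [hkk, Nat.mod_self]
  · next h => exact Nat.mod_eq_of_lt (by omega)

private lemma sum_gg (k : ℕ) (hk : 2 ≤ k) (m : ℕ) :
    ∑ e ∈ range (m + 1), gg k e = HH k m := by
  induction m with
  | zero => simp [gg, HH]
  | succ m ih =>
    rw [Finset.sum_range_succ, ih]
    have hm : m % k < k := Nat.mod_lt _ (by omega)
    have hs := succ_mod k m hk
    unfold gg HH
    split at hs <;> rw [hs] <;> split_ifs <;> first | contradiction | omega

private lemma keySum (k : ℕ) (hk : 2 ≤ k) (m : ℕ) (hm : 1 ≤ m) :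
    ∑ j ∈ range (m + 1), (if j < k then (1 : ℤ) else 0) * gg k (m - j) = 0 := by
  have hrefl := Finset.sum_range_reflect
    (fun j => (if j < k then (1 : ℤ) else 0) * gg k (m - j)) (m + 1)
  rw [← hrefl]
  have : ∀ j ∈ range (m + 1),
      (if m + 1 - 1 - j < k then (1 : ℤ) else 0) * gg k (m - (m + 1 - 1 - j))
        = if m - j < k then gg k j else 0 := by
    intro j hj
    rw [Finset.mem_range] at hj
    have h1 : m + 1 - 1 - j = m - j := by omega
    have h2 : m - (m - j) = j := by omega
    rw [h1, h2]
    split <;> simp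
  rw [Finset.sum_congr rfl this, ← Finset.sum_filter]
  have hfil : (range (m + 1)).filter (fun j => m - j < k) = Ico (m + 1 - k) (m + 1) := by
    ext j
    simp only [Finset.mem_filter, Finset.mem_range, Finset.mem_Ico]
    omega
  rw [hfil, Finset.sum_Ico_eq_sub _ (by omega), sum_gg k hk m]
  rcases le_or_gt (m + 1) k with h | h
  · have : m + 1 - k = 0 := by omega
    rw [this]
    have : m % k = m := Nat.mod_eq_of_lt (by omega)
    simp [HH, this]
    omega
  · have h2 : m + 1 - k = (m - k) + 1 := by omega
    rw [h2, sum_gg k hk]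
    have : m % k = (m - k) % k := Nat.mod_eq_sub_mod (by omega)
    simp [HH, this]

private lemma prod_fact_mul (F : ℕ → ℕ → ℤ) {m n : ℕ} (hm : m ≠ 0) (hn : n ≠ 0)
    (h : m.Coprime n) :
    ∏ p ∈ (m * n).primeFactors, F p ((m * n).factorization p)
      = (∏ p ∈ m.primeFactors, F p (m.factorization p)) *
        ∏ p ∈ n.primeFactors, F p (n.factorization p) := by
  rw [Nat.primeFactors_mul hm hn, Finset.prod_union (Nat.Coprime.disjoint_primeFactors h)]
  congr 1
  · refine Finset.prod_congr rfl fun p hp => ?_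
    have hpn : ¬ p ∣ n := fun hd => (Nat.prime_of_mem_primeFactors hp).one_lt.ne'
      ((Nat.Coprime.coprime_dvd_left (Nat.dvd_of_mem_primeFactors hp) h).eq_one_of_dvd hd)
    rw [Nat.factorization_mul hm hn]
    simp [Nat.factorization_eq_zero_of_not_dvd hpn]
  · refine Finset.prod_congr rfl fun p hp => ?_
    have hpm : ¬ p ∣ m := fun hd => (Nat.prime_of_mem_primeFactors hp).one_lt.ne'
      ((Nat.Coprime.coprime_dvd_left (Nat.dvd_of_mem_primeFactors hp) h.symm).eq_one_of_dvd hd)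
    rw [Nat.factorization_mul hm hn]
    simp [Nat.factorization_eq_zero_of_not_dvd hpm]

private lemma qK_eq_prod (k : ℕ) (hk : 1 ≤ k) (n : ℕ) :
    qK k n = if n = 0 then 0 else
      ∏ p ∈ n.primeFactors, (if n.factorization p < k then (1 : ℤ) else 0) := by
  by_cases hn : n = 0
  · simp [qK, hn]
  · rw [if_neg hn]
    by_cases hC : ∀ p : ℕ, p.Prime → ¬ p ^ k ∣ n
    · rw [qK, if_pos ⟨hn, hC⟩]
      refine (Finset.prod_eq_one fun p hp => ?_).symm
      have hp' := Nat.prime_of_mem_primeFactors hp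
      have : n.factorization p < k := by
        by_contra h
        exact hC p hp' ((hp'.pow_dvd_iff_le_factorization hn).mpr (by omega))
      rw [if_pos this]
    · rw [qK, if_neg (by tauto)]
      push_neg at hC
      obtain ⟨p, hp, hd⟩ := hC
      have hpn : p ∈ n.primeFactors := Nat.mem_primeFactors.mpr
        ⟨hp, dvd_trans (dvd_pow_self p (by omega)) hd, hn⟩
      refine (Finset.prod_eq_zero hpn ?_).symm
      rw [if_neg]
      push_neg
      exact (hp.pow_dvd_iff_le_factorization hn).mp hd

private lemma lamK_prime_pow {p : ℕ} (hp : p.Prime) (k j : ℕ) (hk : 2 ≤ k) :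
    lamK (k - 1) (p ^ j) = gg k j := by
  have hk1 : k - 1 + 1 = k := by omega
  rcases Nat.eq_zero_or_pos j with hj | hj
  · subst hj; simp [lamK, gg, Nat.zero_mod]
  · have hne : p ^ j ≠ 0 := pow_ne_zero _ hp.pos.ne'
    rw [lamK, if_neg hne]
    have hpf : (p ^ j).primeFactors = {p} := by
      rw [Nat.primeFactors_pow _ hj.ne', Nat.Prime.primeFactors hp]
    rw [hpf, Finset.prod_singleton, hp.factorization_pow, Finsupp.single_eq_same, hk1]
    rfl

private lemma qK_prime_pow {p : ℕ} (hp : p.Prime) (k j : ℕ) (hk : 1 ≤ k) :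
    qK k (p ^ j) = if j < k then 1 else 0 := by
  rw [qK_eq_prod k hk, if_neg (pow_ne_zero _ hp.pos.ne')]
  rcases Nat.eq_zero_or_pos j with hj | hj
  · subst hj; simp; omega
  · have hpf : (p ^ j).primeFactors = {p} := by
      rw [Nat.primeFactors_pow _ hj.ne', Nat.Prime.primeFactors hp]
    rw [hpf, Finset.prod_singleton, hp.factorization_pow, Finsupp.single_eq_same]

theorem qK_mul_lamK_eq_delta (k : ℕ) (hk : 2 ≤ k) (n : ℕ) (hn : 0 < n) :
    ∑ d ∈ n.divisors, qK k d * lamK (k - 1) (n / d) =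
      if n = 1 then 1 else 0 := by
  set A : ArithmeticFunction ℤ := ⟨fun n => qK k n, by simp [qK]⟩ with hA
  set B : ArithmeticFunction ℤ := ⟨fun n => lamK (k - 1) n, by simp [lamK]⟩ with hB
  have hk1 : 1 ≤ k := by omega
  have hAmul : A.IsMultiplicative := by
    refine ⟨?_, ?_⟩
    · show qK k 1 = 1
      rw [qK, if_pos]
      refine ⟨one_ne_zero, fun p hp hd => hp.one_lt.ne' ?_⟩
      have h1 : p ^ k = 1 := Nat.eq_one_of_dvd_one hd
      have : p = 1 := by exact (pow_eq_one_iff_left (by omega : k ≠ 0)).mp h1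
      omega
    · intro m n h
      show qK k (m * n) = qK k m * qK k n
      rcases Nat.eq_zero_or_pos m with hm | hm
      · subst hm; simp [qK]
      rcases Nat.eq_zero_or_pos n with hn0 | hn0
      · subst hn0; simp [qK]
      rw [qK_eq_prod k hk1, qK_eq_prod k hk1, qK_eq_prod k hk1,
        if_neg (by positivity), if_neg hm.ne', if_neg hn0.ne']
      exact prod_fact_mul (fun p e => if e < k then (1 : ℤ) else 0) hm.ne' hn0.ne' h
  have hBmul : B.IsMultiplicative := by
    refine ⟨?_, ?_⟩
    · show lamK (k - 1) 1 = 1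
      simp [lamK]
    · intro m n h
      show lamK (k - 1) (m * n) = lamK (k - 1) m * lamK (k - 1) n
      rcases Nat.eq_zero_or_pos m with hm | hm
      · subst hm; simp [lamK]
      rcases Nat.eq_zero_or_pos n with hn0 | hn0
      · subst hn0; simp [lamK]
      rw [lamK, lamK, lamK, if_neg (by positivity), if_neg hm.ne', if_neg hn0.ne']
      exact prod_fact_mul (fun p e =>
        if e % (k - 1 + 1) = 0 then (1 : ℤ) else if e % (k - 1 + 1) = 1 then -1 else 0)
        hm.ne' hn0.ne' h
  have hABone : A * B = 1 := by
    rw [ArithmeticFunction.IsMultiplicative.eq_iff_eq_on_prime_powers (A * B) (hAmul.mul hBmul) 1 ArithmeticFunction.isMultiplicative_one]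
    intro p i hp
    rw [ArithmeticFunction.mul_apply, Nat.sum_divisorsAntidiagonal (fun d e => A d * B e),
      Nat.sum_divisors_prime_pow hp, ArithmeticFunction.one_apply]
    have hterm : ∀ j ∈ range (i + 1),
        A (p ^ j) * B (p ^ i / p ^ j) = (if j < k then (1 : ℤ) else 0) * gg k (i - j) := by
      intro j hj
      rw [Finset.mem_range] at hj
      have hdiv : p ^ i / p ^ j = p ^ (i - j) := Nat.pow_div (by omega) hp.pos
      show qK k (p ^ j) * lamK (k - 1) (p ^ i / p ^ j) = _
      rw [hdiv, qK_prime_pow hp k j hk1, lamK_prime_pow hp k (i - j) hk]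
    rw [Finset.sum_congr rfl hterm]
    rcases Nat.eq_zero_or_pos i with hi | hi
    · subst hi
      have h0 : (0:ℕ) < k := by omega
      simp [gg, Finset.filter_singleton, h0]
    · rw [keySum k hk i hi, if_neg]
      exact (Nat.one_lt_pow hi.ne' hp.one_lt).ne' 
  have := congrArg (fun f => f n) hABone
  simp only [ArithmeticFunction.mul_apply, ArithmeticFunction.one_apply] at this
  rw [← this, Nat.sum_divisorsAntidiagonal (fun d e => A d * B e)]
  rfl
end

section
/- For every integer k ≥ 2 and every positive integer n, μ_k(n) = Σ_{d^k | n} μ_{k-1}(n / d^k) · μ_{k-1}(n / d), the sum taken over positive integers d with d^k dividing n. -/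
/-- The Möbius function of order `j`. -/
def muK (j n : ℕ) : ℤ :=
  if n = 0 then 0 else
    ∏ p ∈ n.primeFactors,
      (if n.factorization p < j then 1
       else if n.factorization p = j then -1 else 0)

lemma muK_eq_zero_of {j m p : ℕ} (hm : m ≠ 0) (hp : p.Prime) (h : j < m.factorization p) :
    muK j m = 0 := by
  have hp' : p ∈ m.primeFactors := by
    rw [Nat.mem_primeFactors]
    exact ⟨hp, Nat.dvd_of_factorization_pos (by omega), hm⟩
  rw [muK, if_neg hm]
  refine Finset.prod_eq_zero hp' ?_
  rw [if_neg (by omega), if_neg (by omega)]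

lemma muK_eq_prod {j m n : ℕ} (hj : 1 ≤ j) (hm : m ≠ 0) (hn : n ≠ 0) (hmn : m ∣ n) :
    muK j m = ∏ p ∈ n.primeFactors,
      (if m.factorization p < j then 1 else if m.factorization p = j then -1 else 0) := by
  rw [muK, if_neg hm]
  refine Finset.prod_subset (Nat.primeFactors_mono hmn hn) ?_
  intro p _ hp
  have h0 : m.factorization p = 0 := by
    rw [← Finsupp.notMem_support_iff, Nat.support_factorization]
    exact hp
  rw [h0, if_pos (by omega)]

theorem muK_eq_sum_muK_pred (k : ℕ) (hk : 2 ≤ k) (n : ℕ) (hn : 0 < n) :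
    muK k n =
      ∑ d ∈ Finset.Icc 1 n,
        (if d ^ k ∣ n then muK (k - 1) (n / d ^ k) * muK (k - 1) (n / d)
         else 0) := by
  have hn' : n ≠ 0 := hn.ne'
  by_cases H : ∀ p ∈ n.primeFactors, n.factorization p ≤ k
  · -- all exponents ≤ k
    set S : Finset ℕ := n.primeFactors.filter (fun p => n.factorization p = k) with hS
    set D : ℕ := ∏ p ∈ S, p with hDdef
    have hprime : ∀ q ∈ S, Nat.Prime q := fun q hq =>
      Nat.prime_of_mem_primeFactors (Finset.mem_filter.mp hq).1
    have hD0 : D ≠ 0 :=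
      Finset.prod_ne_zero_iff.mpr (fun q hq => (hprime q hq).ne_zero)
    have hDfact : ∀ q, D.factorization q = if q ∈ S then 1 else 0 := by
      intro q
      rw [hDdef, Nat.factorization_prod (fun p hp => (hprime p hp).ne_zero),
        Finsupp.finset_sum_apply,
        Finset.sum_congr rfl (fun p hp => by rw [(hprime p hp).factorization, Finsupp.single_apply])]
      exact Finset.sum_ite_eq' S q (fun _ => 1)
    have hDk : D ^ k ∣ n := by
      rw [← Nat.factorization_le_iff_dvd (pow_ne_zero k hD0) hn', Finsupp.le_def]
      intro q
      rw [Nat.factorization_pow, Finsupp.smul_apply, smul_eq_mul, hDfact]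
      by_cases hq : q ∈ S
      · rw [if_pos hq]
        exact le_of_eq (by simpa using ((Finset.mem_filter.mp hq).2).symm)
      · simp [hq]
    have hDdvd : D ∣ n := dvd_trans (dvd_pow_self D (by omega)) hDk
    have hq1 : n / D ^ k ≠ 0 :=
      (Nat.div_pos (Nat.le_of_dvd hn hDk) (Nat.pos_of_ne_zero (pow_ne_zero k hD0))).ne'
    have hq2 : n / D ≠ 0 :=
      (Nat.div_pos (Nat.le_of_dvd hn hDdvd) (Nat.pos_of_ne_zero hD0)).ne'
    rw [Finset.sum_eq_single D]
    · rw [if_pos hDk,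
        muK_eq_prod (by omega) hq1 hn' (Nat.div_dvd_of_dvd hDk),
        muK_eq_prod (by omega) hq2 hn' (Nat.div_dvd_of_dvd hDdvd),
        ← Finset.prod_mul_distrib, muK, if_neg hn']
      apply Finset.prod_congr rfl
      intro p hpmem
      have ha1 : 1 ≤ n.factorization p := by
        have := Nat.support_factorization n ▸ hpmem
        have := Finsupp.mem_support_iff.mp this
        omega
      have ha2 : n.factorization p ≤ k := H p hpmem
      have hv1 : (n / D ^ k).factorization p
          = n.factorization p - k * (if p ∈ S then 1 else 0) := by
        rw [Nat.factorization_div hDk, Finsupp.tsub_apply, Nat.factorization_pow,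
          Finsupp.smul_apply, smul_eq_mul, hDfact]
      have hv2 : (n / D).factorization p
          = n.factorization p - (if p ∈ S then 1 else 0) := by
        rw [Nat.factorization_div hDdvd, Finsupp.tsub_apply, hDfact]
      have hSiff : p ∈ S ↔ n.factorization p = k := by
        simp [hS, Finset.mem_filter, hpmem]
      by_cases hpS : p ∈ S
      · rw [if_pos hpS] at hv1 hv2
        have hak : n.factorization p = k := hSiff.mp hpS
        rw [hv1, hv2, hak]
        split_ifs <;> omega
      · rw [if_neg hpS] at hv1 hv2
        have hak : n.factorization p ≠ k := fun h => hpS (hSiff.mpr h)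
        rw [hv1, hv2]
        simp only [Nat.sub_zero, Nat.mul_zero]
        split_ifs <;> omega
    · -- other terms vanish
      intro d hd hne
      simp only [Finset.mem_Icc] at hd
      split_ifs with hdk
      · have hd0 : d ≠ 0 := by omega
        have hdvdn : d ∣ n := dvd_trans (dvd_pow_self d (by omega)) hdk
        have hdq1 : n / d ^ k ≠ 0 :=
          (Nat.div_pos (Nat.le_of_dvd hn hdk) (Nat.pos_of_ne_zero (pow_ne_zero k hd0))).ne'
        have hdD : d.factorization ≠ D.factorization := fun h =>
          hne (Nat.factorization_inj hd0 hD0 h)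
        obtain ⟨q, hq⟩ := Finsupp.ne_iff.mp hdD
        rw [hDfact] at hq
        have hle : ∀ r, k * d.factorization r ≤ n.factorization r := by
          intro r
          have h1 := (Nat.factorization_le_iff_dvd (pow_ne_zero k hd0) hn').mpr hdk
          have h2 := Finsupp.le_def.mp h1 r
          rwa [Nat.factorization_pow, Finsupp.smul_apply, smul_eq_mul] at h2
        by_cases hqS : q ∈ S
        · rw [if_pos hqS] at hq
          have hqp : Nat.Prime q := hprime q hqS
          have hnq : n.factorization q = k := (Finset.mem_filter.mp hqS).2
          have hlek : k * d.factorization q ≤ k := by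
            have := hle q; omega
          have ht1 : d.factorization q ≤ 1 :=
            Nat.le_of_mul_le_mul_left
              (show k * d.factorization q ≤ k * 1 by omega) (by omega)
          have ht0 : d.factorization q = 0 := by omega
          have hvq : (n / d ^ k).factorization q = k := by
            rw [Nat.factorization_div hdk, Finsupp.tsub_apply, Nat.factorization_pow,
              Finsupp.smul_apply, smul_eq_mul, ht0]
            omega
          rw [muK_eq_zero_of hdq1 hqp (by omega : k - 1 < (n / d ^ k).factorization q),
            zero_mul]
        · rw [if_neg hqS] at hq
          exfalso
          have ht : 1 ≤ d.factorization q := Nat.pos_of_ne_zero hq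
          have hqp : Nat.Prime q :=
            Nat.prime_of_mem_primeFactors (n := d)
              (by rw [← Nat.support_factorization]; exact Finsupp.mem_support_iff.mpr hq)
          have hqn : q ∈ n.primeFactors := by
            rw [Nat.mem_primeFactors]
            exact ⟨hqp, dvd_trans (Nat.dvd_of_factorization_pos hq) hdvdn, hn'⟩
          have h1 : k ≤ k * d.factorization q := Nat.le_mul_of_pos_right k (by omega)
          have h2 := hle q
          have h3 := H q hqn
          have hak : n.factorization q = k := by omega
          exact hqS (Finset.mem_filter.mpr ⟨hqn, hak⟩)
      · rfl
    · intro hD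
      exact absurd (Finset.mem_Icc.mpr ⟨Nat.pos_of_ne_zero hD0, Nat.le_of_dvd hn hDdvd⟩) hD
  · -- some exponent > k : both sides are zero
    push_neg at H
    obtain ⟨p, hpmem, hpk⟩ := H
    have hp : p.Prime := Nat.prime_of_mem_primeFactors hpmem
    rw [muK_eq_zero_of hn' hp (by omega)]
    symm
    apply Finset.sum_eq_zero
    intro d hd
    split_ifs with hdk
    · simp only [Finset.mem_Icc] at hd
      have hd0 : d ≠ 0 := by omega
      have hdvdn : d ∣ n := dvd_trans (dvd_pow_self d (by omega)) hdk
      have hdq1 : n / d ^ k ≠ 0 :=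
        (Nat.div_pos (Nat.le_of_dvd hn hdk) (Nat.pos_of_ne_zero (pow_ne_zero k hd0))).ne'
      have hdq2 : n / d ≠ 0 :=
        (Nat.div_pos (Nat.le_of_dvd hn hdvdn) (Nat.pos_of_ne_zero hd0)).ne'
      have hle : k * d.factorization p ≤ n.factorization p := by
        have h1 := (Nat.factorization_le_iff_dvd (pow_ne_zero k hd0) hn').mpr hdk
        have h2 := Finsupp.le_def.mp h1 p
        rwa [Nat.factorization_pow, Finsupp.smul_apply, smul_eq_mul] at h2
      have hv1 : (n / d ^ k).factorization p = n.factorization p - k * d.factorization p := by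
        rw [Nat.factorization_div hdk, Finsupp.tsub_apply, Nat.factorization_pow,
          Finsupp.smul_apply, smul_eq_mul]
      have hv2 : (n / d).factorization p = n.factorization p - d.factorization p := by
        rw [Nat.factorization_div hdvdn, Finsupp.tsub_apply]
      rcases lt_or_ge (k - 1) ((n / d ^ k).factorization p) with h | h
      · rw [muK_eq_zero_of hdq1 hp h, zero_mul]
      · rcases lt_or_ge (k - 1) ((n / d).factorization p) with h' | h'
        · rw [muK_eq_zero_of hdq2 hp h', mul_zero]
        · exfalso
          rw [hv1] at h
          rw [hv2] at h'
          have ht : 2 ≤ d.factorization p := by omega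
          have hlb : k + d.factorization p ≤ k * d.factorization p := Nat.add_le_mul hk ht
          have : k + d.factorization p ≤ n.factorization p := le_trans hlb hle
          omega
    · rfl
end

section
/- The number of squarefree positive integers not exceeding x equals (6/π²)·x + O(√x); i.e., there is a constant C with |#{n ≤ x : n squarefree} − 6x/π²| ≤ C√x for all x ≥ 1. -/
open Finset ArithmeticFunction Real
open scoped ArithmeticFunction.Moebius ArithmeticFunction.zeta


lemma sum_moebius_divisors (b : ℕ) :
    ∑ d ∈ b.divisors, μ d = if b = 1 then 1 else 0 := by
  have h : (μ * ζ : ArithmeticFunction ℤ) b = (1 : ArithmeticFunction ℤ) b := by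
    rw [moebius_mul_coe_zeta]
  rwa [coe_mul_zeta_apply, one_apply] at h

lemma sf_eq_sum {N n : ℕ} (h1 : 1 ≤ n) (h2 : n ≤ N) :
    (if Squarefree n then (1:ℤ) else 0) =
      ∑ d ∈ (Finset.Icc 1 N.sqrt).filter (fun d => d^2 ∣ n), μ d := by
  have hn0 : n ≠ 0 := by omega
  set s := Nat.floorRoot 2 n with hs
  have hs0 : s ≠ 0 := Nat.floorRoot_ne_zero.2 ⟨two_ne_zero, hn0⟩
  have hset : (Finset.Icc 1 N.sqrt).filter (fun d => d^2 ∣ n) = s.divisors := by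
    ext d
    simp only [Finset.mem_filter, Finset.mem_Icc, Nat.mem_divisors]
    constructor
    · rintro ⟨⟨-, -⟩, hd⟩
      exact ⟨Nat.pow_dvd_iff_dvd_floorRoot.1 hd, hs0⟩
    · rintro ⟨hd, -⟩
      have hdvd : d ^ 2 ∣ n := Nat.pow_dvd_iff_dvd_floorRoot.2 hd
      have hd0 : d ≠ 0 := by
        rintro rfl
        exact hs0 (Nat.eq_zero_of_zero_dvd hd)
      have hle : d ^ 2 ≤ n := Nat.le_of_dvd (by omega) hdvd
      refine ⟨⟨by omega, Nat.le_sqrt.2 ?_⟩, hdvd⟩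
      calc d * d = d ^ 2 := by ring
      _ ≤ n := hle
      _ ≤ N := h2
  rw [hset, sum_moebius_divisors]
  have : s = 1 ↔ Squarefree n := by
    constructor
    · intro h1s
      rw [Nat.squarefree_iff_prime_squarefree]
      intro p hp hpn
      have : p ∣ s := Nat.pow_dvd_iff_dvd_floorRoot.1 (by rwa [sq])
      rw [h1s, Nat.dvd_one] at this
      exact hp.ne_one this
    · intro hsf
      have : s * s ∣ n := by
        have := Nat.floorRoot_pow_dvd (n := 2) (a := n)
        rwa [sq] at this
      exact Nat.isUnit_iff.1 (hsf s this)
  simp [this]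

lemma count_eq (N : ℕ) :
    (((Finset.Icc 1 N).filter Squarefree).card : ℤ) =
      ∑ d ∈ Finset.Icc 1 N.sqrt, μ d * ((N / d^2 : ℕ) : ℤ) := by
  rw [Finset.card_filter]
  push_cast
  calc (∑ n ∈ Finset.Icc 1 N, if Squarefree n then (1:ℤ) else 0)
      = ∑ n ∈ Finset.Icc 1 N, ∑ d ∈ (Finset.Icc 1 N.sqrt).filter (fun d => d^2 ∣ n), μ d := by
        refine Finset.sum_congr rfl fun n hn => ?_
        rw [Finset.mem_Icc] at hn
        exact sf_eq_sum hn.1 hn.2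
    _ = ∑ n ∈ Finset.Icc 1 N, ∑ d ∈ Finset.Icc 1 N.sqrt, if d^2 ∣ n then μ d else 0 := by
        simp [Finset.sum_filter]
    _ = ∑ d ∈ Finset.Icc 1 N.sqrt, ∑ n ∈ Finset.Icc 1 N, if d^2 ∣ n then μ d else 0 :=
        Finset.sum_comm
    _ = ∑ d ∈ Finset.Icc 1 N.sqrt, μ d * ((N / d^2 : ℕ) : ℤ) := by
        refine Finset.sum_congr rfl fun d _ => ?_
        rw [← Finset.sum_filter, Finset.sum_const, ← Nat.Ioc_filter_dvd_card_eq_div]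
        have : Finset.Icc 1 N = Finset.Ioc 0 N := rfl
        rw [this]
        simp [mul_comm]


noncomputable def mf (d : ℕ) : ℝ := if d = 0 then 0 else (μ d : ℝ) / d ^ 2

lemma mf_abs_le (d : ℕ) : |mf d| ≤ 1 / d ^ 2 := by
  unfold mf
  rcases eq_or_ne d 0 with rfl | hd
  · simp
  · rw [if_neg hd, abs_div, abs_pow, Nat.abs_cast]
    apply div_le_div_of_nonneg_right ?_ (by positivity)
    exact_mod_cast abs_moebius_le_one

lemma mf_summable : Summable mf := by
  have h : Summable (fun d : ℕ => 1 / (d : ℝ) ^ 2) :=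
    Real.summable_one_div_nat_pow.2 one_lt_two
  refine Summable.of_abs (h.of_nonneg_of_le (fun d => abs_nonneg _) mf_abs_le)

lemma mf_tsum : ∑' d, mf d = 6 / π ^ 2 := by
  have h2 : (1:ℝ) < (2:ℂ).re := by norm_num
  have hmul := LSeries_one_mul_Lseries_moebius h2
  rw [LSeries_one_eq_riemannZeta h2, riemannZeta_two] at hmul
  have hpi2 : (π : ℂ) ^ 2 ≠ 0 := pow_ne_zero 2 (Complex.ofReal_ne_zero.2 Real.pi_ne_zero)
  have hpi : (π : ℂ) ^ 2 / 6 ≠ 0 := div_ne_zero hpi2 (by norm_num)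
  have hL : LSeries (fun n => (μ n : ℂ)) 2 = 6 / (π : ℂ) ^ 2 := by
    field_simp at hmul ⊢
    linear_combination hmul
  have hcast : ((∑' d, mf d : ℝ) : ℂ) = LSeries (fun n => (μ n : ℂ)) 2 := by
    rw [Complex.ofReal_tsum]
    apply tsum_congr
    intro n
    rw [LSeries.term_def]
    rcases eq_or_ne n 0 with rfl | hn
    · simp [mf]
    · rw [if_neg hn, mf, if_neg hn]
      push_cast
      rw [Complex.cpow_ofNat]
  have := hcast.trans hL
  have h6 : ((6 / π ^ 2 : ℝ) : ℂ) = 6 / (π : ℂ) ^ 2 := by push_cast; ring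
  exact_mod_cast this.trans h6.symm

lemma key_ineq {a : ℝ} (ha : 1 ≤ a) : 1 / (a + 1) ^ 2 ≤ 1 / a - 1 / (a + 1) := by
  have h1 : 1 / a - 1 / (a + 1) = 1 / (a * (a + 1)) := by
    field_simp
    ring
  rw [h1]
  apply one_div_le_one_div_of_le (by positivity)
  nlinarith

set_option maxHeartbeats 1000000 in
lemma mf_tail (D : ℕ) (hD : 1 ≤ D) :
    |(∑' d, mf d) - ∑ d ∈ Finset.Icc 1 D, (μ d : ℝ) / d ^ 2| ≤ 1 / D := by
  have hpart : ∑ d ∈ Finset.Icc 1 D, (μ d : ℝ) / d ^ 2 = ∑ d ∈ Finset.range (D + 1), mf d := by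
    rw [Finset.range_eq_Ico, ← Finset.Ico_add_one_right_eq_Icc]
    rw [Finset.sum_Ico_eq_sum_range, Finset.sum_Ico_eq_sum_range]
    simp only [Nat.succ_sub_one, Nat.sub_zero, zero_add]
    rw [Finset.sum_range_succ']
    have h0 : mf 0 = 0 := by simp [mf]
    rw [h0, add_zero]
    refine Finset.sum_congr rfl fun i _ => ?_
    rw [mf, if_neg (by omega), add_comm 1 i]
  rw [hpart]
  have hsum := Summable.sum_add_tsum_nat_add (D + 1) mf_summable
  have heq : (∑' d, mf d) - ∑ d ∈ Finset.range (D + 1), mf d = ∑' i, mf (i + (D + 1)) := by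
    linarith [hsum]
  rw [heq]
  have hshift : Summable (fun i => mf (i + (D + 1))) :=
    (summable_nat_add_iff (D + 1)).2 mf_summable
  have habs : |∑' i, mf (i + (D + 1))| ≤ ∑' i, |mf (i + (D + 1))| := by
    have := norm_tsum_le_tsum_norm (f := fun i => mf (i + (D + 1))) (by
      simpa [Real.norm_eq_abs] using hshift.abs)
    simpa [Real.norm_eq_abs] using this
  refine habs.trans ?_
  apply Real.tsum_le_of_sum_range_le (fun n => abs_nonneg _)
  intro n
  have hterm : ∀ i : ℕ, |mf (i + (D + 1))| ≤
      1 / ((D : ℝ) + i) - 1 / ((D : ℝ) + (i + 1)) := by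
    intro i
    refine (mf_abs_le _).trans ?_
    have h1 : ((i + (D + 1) : ℕ) : ℝ) = ((D : ℝ) + i) + 1 := by push_cast; ring
    have h2 : ((D : ℝ) + (i + 1)) = ((D : ℝ) + i) + 1 := by ring
    rw [h1, h2]
    refine key_ineq ?_
    have h3 : (1:ℝ) ≤ (D:ℝ) := by exact_mod_cast hD
    have h4 : (0:ℝ) ≤ (i:ℝ) := Nat.cast_nonneg i
    linarith
  have hst : ∑ i ∈ Finset.range n, |mf (i + (D + 1))|
      ≤ ∑ i ∈ Finset.range n, (1 / ((D : ℝ) + i) - 1 / ((D : ℝ) + (i + 1))) :=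
    Finset.sum_le_sum fun i _ => hterm i
  have htel : ∑ i ∈ Finset.range n, (1 / ((D : ℝ) + i) - 1 / ((D : ℝ) + (i + 1)))
      = 1 / ((D : ℝ) + 0) - 1 / ((D : ℝ) + n) := by
    have h := Finset.sum_range_sub' (f := fun i : ℕ => 1 / ((D : ℝ) + i)) n
    push_cast at h ⊢
    convert h using 2
  have hDpos : (0:ℝ) < D := by exact_mod_cast hD
  have hnn : 0 ≤ 1 / ((D : ℝ) + n) := by positivity
  rw [htel] at hst
  rw [add_zero] at hst
  linarith

theorem squarefree_count_asymptotic :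
    ∃ C : ℝ, ∀ x : ℝ, 1 ≤ x →
      |(((Finset.Icc 1 ⌊x⌋₊).filter Squarefree).card : ℝ) -
          6 * x / Real.pi ^ 2| ≤ C * Real.sqrt x := by
  refine ⟨6, fun x hx => ?_⟩
  have hx0 : (0:ℝ) < x := by linarith
  set N := ⌊x⌋₊ with hNdef
  have hN1 : 1 ≤ N := Nat.le_floor (by exact_mod_cast hx)
  set D := N.sqrt with hDdef
  have hD1 : 1 ≤ D := Nat.sqrt_pos.2 (by omega)
  have hNx : (N:ℝ) ≤ x := Nat.floor_le hx0.le
  have hxN : x < N + 1 := Nat.lt_floor_add_one x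
  have hsx : 1 ≤ Real.sqrt x := by
    rw [show (1:ℝ) = Real.sqrt 1 by simp]
    exact Real.sqrt_le_sqrt hx
  have hDR1 : (1:ℝ) ≤ (D:ℝ) := by exact_mod_cast hD1
  have hDR0 : (0:ℝ) < (D:ℝ) := by linarith
  have hDsq : ((D:ℝ))^2 ≤ x := by
    have h := Nat.sqrt_le' N
    have : ((D^2 : ℕ) : ℝ) ≤ (N:ℝ) := by exact_mod_cast h
    push_cast at this
    linarith
  have hDx : (D:ℝ) ≤ Real.sqrt x := by
    rw [show (D:ℝ) = Real.sqrt ((D:ℝ)^2) by rw [Real.sqrt_sq (by positivity)]]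
    exact Real.sqrt_le_sqrt hDsq
  have hN4D : (N:ℝ) ≤ 4 * (D:ℝ)^2 := by
    have h := Nat.lt_succ_sqrt' N
    have h2 : (N:ℝ) < ((D:ℝ) + 1)^2 := by exact_mod_cast h
    nlinarith
  -- the exact counting formula
  have hQ : (((Finset.Icc 1 N).filter Squarefree).card : ℝ)
      = ∑ d ∈ Finset.Icc 1 D, (μ d : ℝ) * ((N / d^2 : ℕ) : ℝ) := by
    have h := count_eq N
    rw [← hDdef] at h
    have h2 := congrArg (fun z : ℤ => (z : ℝ)) h
    push_cast at h2
    exact h2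
  set Q : ℝ := (((Finset.Icc 1 N).filter Squarefree).card : ℝ) with hQdef
  set A : ℝ := ∑ d ∈ Finset.Icc 1 D, (μ d : ℝ) * ((N:ℝ) / (d:ℝ)^2) with hAdef
  set P : ℝ := ∑ d ∈ Finset.Icc 1 D, (μ d : ℝ) / (d:ℝ)^2 with hPdef
  have hmu : ∀ d : ℕ, |(μ d : ℝ)| ≤ 1 := by
    intro d
    have := abs_moebius_le_one (n := d)
    exact_mod_cast this
  -- E1
  have hE1 : |Q - A| ≤ (D:ℝ) := by
    rw [hQ, hAdef, ← Finset.sum_sub_distrib]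
    calc |∑ d ∈ Finset.Icc 1 D, ((μ d : ℝ) * ((N / d^2 : ℕ) : ℝ) - (μ d : ℝ) * ((N:ℝ) / (d:ℝ)^2))|
        ≤ ∑ d ∈ Finset.Icc 1 D, |(μ d : ℝ) * ((N / d^2 : ℕ) : ℝ) - (μ d : ℝ) * ((N:ℝ) / (d:ℝ)^2)| :=
          Finset.abs_sum_le_sum_abs _ _
      _ ≤ ∑ d ∈ Finset.Icc 1 D, 1 := by
          refine Finset.sum_le_sum fun d hd => ?_
          rw [Finset.mem_Icc] at hd
          have hd0 : (0:ℝ) < (d:ℝ)^2 := by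
            have : (1:ℝ) ≤ (d:ℝ) := by exact_mod_cast hd.1
            positivity
          rw [← mul_sub, abs_mul]
          have hfl : |((N / d^2 : ℕ) : ℝ) - (N:ℝ) / (d:ℝ)^2| ≤ 1 := by
            have h1 : ((N / d^2 : ℕ) : ℝ) ≤ (N:ℝ) / ((d:ℝ)^2) := by
              have := Nat.cast_div_le (α := ℝ) (m := N) (n := d^2)
              push_cast at this
              exact this
            have h2 : (N:ℝ) / (d:ℝ)^2 < ((N / d^2 : ℕ) : ℝ) + 1 := by
              have hk : 0 < d^2 := by
                have := hd.1
                exact pow_pos (by omega) 2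
              have h3 : N < d^2 * (N / d^2 + 1) := Nat.lt_mul_div_succ N hk
              have h4 : (N:ℝ) < ((d:ℝ)^2) * (((N / d^2 : ℕ) : ℝ) + 1) := by
                exact_mod_cast h3
              rw [div_lt_iff₀ hd0]
              linarith [h4]
            rw [abs_le]
            constructor <;> linarith
          calc |(μ d : ℝ)| * |((N / d^2 : ℕ) : ℝ) - (N:ℝ) / (d:ℝ)^2| ≤ 1 * 1 :=
              mul_le_mul (hmu d) hfl (abs_nonneg _) zero_le_one
            _ = 1 := by ring
      _ = (D:ℝ) := by
          rw [Finset.sum_const, Nat.card_Icc]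
          simp
  have hAP : A = (N:ℝ) * P := by
    rw [hAdef, hPdef, Finset.mul_sum]
    refine Finset.sum_congr rfl fun d _ => ?_
    ring
  -- E2
  have hE2 : |A - (N:ℝ) * (6 / π^2)| ≤ 4 * Real.sqrt x := by
    rw [hAP, ← mul_sub, abs_mul, Nat.abs_cast]
    have htail : |P - 6 / π^2| ≤ (1:ℝ) / (D:ℝ) := by
      have := mf_tail D hD1
      rw [mf_tsum] at this
      rw [abs_sub_comm] at this
      exact this
    calc (N:ℝ) * |P - 6 / π^2| ≤ (N:ℝ) * ((1:ℝ) / (D:ℝ)) :=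
        mul_le_mul_of_nonneg_left htail (by positivity)
      _ = (N:ℝ) / (D:ℝ) := by ring
      _ ≤ 4 * (D:ℝ) := by
          rw [div_le_iff₀ hDR0]
          nlinarith
      _ ≤ 4 * Real.sqrt x := by linarith
  -- E3
  have hpi2 : (0:ℝ) < π^2 := by positivity
  have hE3 : |(N:ℝ) * (6 / π^2) - 6 * x / π^2| ≤ 1 := by
    have h6 : (6:ℝ) / π^2 ≤ 1 := by
      rw [div_le_one hpi2]
      nlinarith [Real.pi_gt_three]
    have heq : (N:ℝ) * (6 / π^2) - 6 * x / π^2 = ((N:ℝ) - x) * (6 / π^2) := by ring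
    rw [heq, abs_mul]
    have h1 : |(N:ℝ) - x| ≤ 1 := by
      rw [abs_le]; constructor <;> linarith
    have h2 : |(6:ℝ) / π^2| ≤ 1 := by
      rw [abs_of_pos (by positivity)]; exact h6
    calc |(N:ℝ) - x| * |(6:ℝ) / π^2| ≤ 1 * 1 :=
        mul_le_mul h1 h2 (abs_nonneg _) zero_le_one
      _ = 1 := by ring
  calc |Q - 6 * x / π^2|
      ≤ |Q - A| + |A - (N:ℝ) * (6 / π^2)| + |(N:ℝ) * (6 / π^2) - 6 * x / π^2| := by
        have := abs_sub_le Q A ((N:ℝ) * (6 / π^2))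
        have := abs_sub_le A ((N:ℝ) * (6 / π^2)) (6 * x / π^2)
        have h3 := abs_sub_le Q ((N:ℝ) * (6 / π^2)) (6 * x / π^2)
        linarith [abs_sub_le Q A ((N:ℝ) * (6 / π^2)),
          abs_sub_le Q ((N:ℝ) * (6 / π^2)) (6 * x / π^2)]
      _ ≤ Real.sqrt x + 4 * Real.sqrt x + 1 := by
        have := hE1.trans hDx
        linarith
      _ ≤ 6 * Real.sqrt x := by linarith
end

section
/- For every integer k ≥ 2 and all positive integers a, b with gcd(a, b) = 1, we have μ_{k-1}(b) · μ_{k-1}(a^{k-1} b) = |μ_{k-1}(b)| · μ(a). -/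
lemma muK_mem (j n : ℕ) : muK j n = -1 ∨ muK j n = 0 ∨ muK j n = 1 := by
  unfold muK
  split
  · tauto
  · refine Finset.prod_induction _ (fun x => x = -1 ∨ x = 0 ∨ x = 1) ?_ (by tauto) ?_
    · rintro x y (rfl | rfl | rfl) (rfl | rfl | rfl) <;> norm_num
    · intro p _
      split
      · tauto
      · split <;> tauto

lemma muK_sq (j n : ℕ) : muK j n * muK j n = |muK j n| := by
  rcases muK_mem j n with h | h | h <;> rw [h] <;> norm_num

lemma muK_pow_mul (j : ℕ) (hj : 1 ≤ j) (a b : ℕ) (ha : 0 < a) (hb : 0 < b)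
    (hab : Nat.Coprime a b) :
    muK j (a ^ j * b) = (ArithmeticFunction.moebius a) * muK j b := by
  have hj0 : j ≠ 0 := by omega
  have ha0 : a ≠ 0 := ha.ne'
  have hb0 : b ≠ 0 := hb.ne'
  have hpa : (a ^ j) ≠ 0 := pow_ne_zero _ ha0
  have hN : a ^ j * b ≠ 0 := mul_ne_zero hpa hb0
  have hunion : (a ^ j * b).primeFactors = a.primeFactors ∪ b.primeFactors := by
    rw [Nat.primeFactors_mul hpa hb0, Nat.primeFactors_pow _ hj0]
  have hdisj : Disjoint a.primeFactors b.primeFactors :=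
    Nat.Coprime.disjoint_primeFactors hab
  have hfa : ∀ p ∈ a.primeFactors, (a ^ j * b).factorization p = j * a.factorization p := by
    intro p hp
    have hpprime := Nat.prime_of_mem_primeFactors hp
    have hpb : b.factorization p = 0 := by
      apply Nat.factorization_eq_zero_of_not_dvd
      intro hdvd
      exact hpprime.one_lt.ne' (Nat.eq_one_of_dvd_coprimes hab
        (Nat.dvd_of_mem_primeFactors hp) hdvd)
    rw [Nat.factorization_mul hpa hb0, Nat.factorization_pow]
    simp [hpb, mul_comm]
  have hfb : ∀ p ∈ b.primeFactors, (a ^ j * b).factorization p = b.factorization p := by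
    intro p hp
    have hpprime := Nat.prime_of_mem_primeFactors hp
    have hpa' : a.factorization p = 0 := by
      apply Nat.factorization_eq_zero_of_not_dvd
      intro hdvd
      exact hpprime.one_lt.ne' (Nat.eq_one_of_dvd_coprimes hab hdvd
        (Nat.dvd_of_mem_primeFactors hp))
    rw [Nat.factorization_mul hpa hb0, Nat.factorization_pow]
    simp [hpa']
  unfold muK
  rw [if_neg hN, if_neg hb0, hunion, Finset.prod_union hdisj]
  have hbprod : (∏ p ∈ b.primeFactors,
      (if (a ^ j * b).factorization p < j then (1:ℤ)
       else if (a ^ j * b).factorization p = j then -1 else 0)) =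
      ∏ p ∈ b.primeFactors,
      (if b.factorization p < j then (1:ℤ)
       else if b.factorization p = j then -1 else 0) := by
    apply Finset.prod_congr rfl
    intro p hp
    rw [hfb p hp]
  rw [hbprod]
  congr 1
  by_cases hsq : Squarefree a
  · have hone : ∀ p ∈ a.primeFactors, a.factorization p = 1 := by
      intro p hp
      have h1 : a.factorization p ≤ 1 :=
        (Nat.squarefree_iff_factorization_le_one ha0).mp hsq p
      have h2 : 1 ≤ a.factorization p := by
        rw [← Nat.support_factorization] at hp
        have := Finsupp.mem_support_iff.mp hp
        omega
      omega
    have : (∏ p ∈ a.primeFactors,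
        (if (a ^ j * b).factorization p < j then (1:ℤ)
         else if (a ^ j * b).factorization p = j then -1 else 0)) =
        ∏ _p ∈ a.primeFactors, (-1 : ℤ) := by
      apply Finset.prod_congr rfl
      intro p hp
      rw [hfa p hp, hone p hp, mul_one]
      simp
    rw [this, Finset.prod_const, ArithmeticFunction.moebius_apply_of_squarefree hsq]
    congr 1
    rw [← (ArithmeticFunction.cardDistinctFactors_eq_cardFactors_iff_squarefree ha0).mpr hsq,
      ArithmeticFunction.cardDistinctFactors_apply, Nat.primeFactors,
      List.card_toFinset]
  · rw [ArithmeticFunction.moebius_eq_zero_of_not_squarefree hsq]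
    rw [Nat.squarefree_iff_factorization_le_one ha0] at hsq
    push_neg at hsq
    obtain ⟨p, hp2⟩ := hsq
    have hpmem : p ∈ a.primeFactors := by
      rw [← Nat.support_factorization]
      exact Finsupp.mem_support_iff.mpr (by omega)
    apply Finset.prod_eq_zero hpmem
    rw [hfa p hpmem]
    have h1 : ¬ (j * a.factorization p < j) := by nlinarith
    have h2 : j * a.factorization p ≠ j := by nlinarith
    rw [if_neg h1, if_neg h2]

theorem muK_pow_mul_of_coprime (k : ℕ) (hk : 2 ≤ k) (a b : ℕ)
    (ha : 0 < a) (hb : 0 < b) (hab : Nat.Coprime a b) :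
    muK (k - 1) b * muK (k - 1) (a ^ (k - 1) * b) =
      |muK (k - 1) b| * ArithmeticFunction.moebius a := by
  have hj : 1 ≤ k - 1 := by omega
  rw [muK_pow_mul (k - 1) hj a b ha hb hab, ← muK_sq (k - 1) b]
  ring
end

section
/- If the partial sums M(x) = Σ_{n ≤ x} μ(n) satisfy M(x) = O(x^{1/2+ε}) for every ε > 0, then for every integer k ≥ 1 the partial sums Σ_{n ≤ x} λ_k(n) also satisfy the bound O(x^{1/2+ε}) for every ε > 0, via the identity λ_k(n) = Σ_{d^{k+1} | n} μ(n/d^{k+1}). -/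
open Finset ArithmeticFunction

/-- Indicator of (k+1)-th powers, with a decidable (bounded) condition. -/
def chiK (k : ℕ) : ArithmeticFunction ℤ :=
  ⟨fun n => if ∃ d < n + 1, 0 < d ∧ d ^ (k + 1) = n then 1 else 0, by
    show (if ∃ d < 0 + 1, 0 < d ∧ d ^ (k + 1) = 0 then 1 else 0) = (0:ℤ)
    rw [if_neg]; rintro ⟨d, -, hd, hdn⟩; exact (pow_pos hd _).ne' hdn⟩

lemma chiK_cond_iff (k n : ℕ) :
    (∃ d < n + 1, 0 < d ∧ d ^ (k + 1) = n) ↔ ∃ d, 0 < d ∧ d ^ (k + 1) = n := by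
  constructor
  · rintro ⟨d, -, h⟩; exact ⟨d, h⟩
  · rintro ⟨d, hd, h⟩
    refine ⟨d, ?_, hd, h⟩
    have : d ≤ d ^ (k + 1) := Nat.le_self_pow (Nat.succ_ne_zero k) d
    omega

lemma chiK_apply (k n : ℕ) :
    chiK k n = if ∃ d < n + 1, 0 < d ∧ d ^ (k + 1) = n then 1 else 0 := rfl

lemma chiK_eq_one (k n : ℕ) (h : ∃ d, 0 < d ∧ d ^ (k + 1) = n) : chiK k n = 1 := by
  rw [chiK_apply, if_pos ((chiK_cond_iff k n).2 h)]

lemma chiK_eq_zero (k n : ℕ) (h : ¬ ∃ d, 0 < d ∧ d ^ (k + 1) = n) : chiK k n = 0 := by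
  rw [chiK_apply, if_neg (fun hc => h ((chiK_cond_iff k n).1 hc))]

lemma chiK_apply_prime_pow {k p m : ℕ} (hp : p.Prime) :
    chiK k (p ^ m) = if (k + 1) ∣ m then 1 else 0 := by
  by_cases h : (k + 1) ∣ m
  · obtain ⟨j, rfl⟩ := h
    rw [if_pos ⟨j, rfl⟩]
    exact chiK_eq_one _ _ ⟨p ^ j, pow_pos hp.pos _, by rw [← pow_mul, Nat.mul_comm]⟩
  · rw [if_neg h]
    apply chiK_eq_zero
    rintro ⟨d, hd, hdm⟩
    have hdvd : d ∣ p ^ m := hdm ▸ dvd_pow_self d (Nat.succ_ne_zero k)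
    obtain ⟨j, -, rfl⟩ := (Nat.dvd_prime_pow hp).1 hdvd
    rw [← pow_mul] at hdm
    have hjm := Nat.pow_right_injective hp.two_le hdm
    exact h ⟨j, by rw [← hjm, Nat.mul_comm]⟩

lemma isUnit_gcd_of_coprime {m n : ℕ} (hmn : Nat.Coprime m n) : IsUnit (gcd m n) := by
  rw [Nat.Coprime] at hmn
  rw [show gcd m n = Nat.gcd m n from rfl, hmn]
  exact isUnit_one

lemma chiK_mult (k : ℕ) : (chiK k).IsMultiplicative := by
  refine ⟨chiK_eq_one _ _ ⟨1, one_pos, one_pow _⟩, ?_⟩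
  intro m n hmn
  by_cases h : ∃ d, 0 < d ∧ d ^ (k + 1) = m * n
  · obtain ⟨d, hd, hdmn⟩ := h
    have hm : m ≠ 0 := by
      rintro rfl; rw [zero_mul] at hdmn; exact (pow_pos hd _).ne' hdmn
    have hn : n ≠ 0 := by
      rintro rfl; rw [mul_zero] at hdmn; exact (pow_pos hd _).ne' hdmn
    obtain ⟨a, ha⟩ := exists_eq_pow_of_mul_eq_pow (α := ℕ)
      (isUnit_gcd_of_coprime hmn) hdmn.symm
    obtain ⟨b, hb⟩ := exists_eq_pow_of_mul_eq_pow (α := ℕ)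
      (isUnit_gcd_of_coprime hmn.symm) (mul_comm m n ▸ hdmn.symm)
    have hapos : 0 < a := by
      rcases Nat.eq_zero_or_pos a with rfl | h'
      · exact absurd ha (by simpa using hm)
      · exact h'
    have hbpos : 0 < b := by
      rcases Nat.eq_zero_or_pos b with rfl | h'
      · exact absurd hb (by simpa using hn)
      · exact h'
    rw [chiK_eq_one _ _ ⟨d, hd, hdmn⟩, chiK_eq_one _ _ ⟨a, hapos, ha.symm⟩,
      chiK_eq_one _ _ ⟨b, hbpos, hb.symm⟩, one_mul]
  · rw [chiK_eq_zero _ _ h]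
    by_cases hP : ∃ a, 0 < a ∧ a ^ (k + 1) = m
    · by_cases hQ : ∃ b, 0 < b ∧ b ^ (k + 1) = n
      · obtain ⟨a, ha, ham⟩ := hP
        obtain ⟨b, hb, hbn⟩ := hQ
        exact absurd ⟨a * b, Nat.mul_pos ha hb, by rw [mul_pow, ham, hbn]⟩ h
      · rw [chiK_eq_zero _ _ hQ, mul_zero]
    · rw [chiK_eq_zero _ _ hP, zero_mul]

def lamKA (k : ℕ) : ArithmeticFunction ℤ := ⟨lamK k, by simp [lamK]⟩

lemma lamKA_mult (k : ℕ) : (lamKA k).IsMultiplicative := by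
  refine ⟨by simp [lamKA, lamK], fun {m n} hmn => ?_⟩
  rcases eq_or_ne m 0 with rfl | hm
  · simp [lamKA, lamK]
  rcases eq_or_ne n 0 with rfl | hn
  · simp [lamKA, lamK]
  show lamK k (m * n) = lamK k m * lamK k n
  rw [lamK, lamK, lamK, if_neg (Nat.mul_ne_zero hm hn), if_neg hm, if_neg hn,
    hmn.primeFactors_mul, Finset.prod_union hmn.disjoint_primeFactors]
  congr 1
  · refine Finset.prod_congr rfl fun p hp => ?_
    have hpn : p ∉ n.primeFactors :=
      Finset.disjoint_left.mp hmn.disjoint_primeFactors hp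
    have h0 : n.factorization p = 0 := by
      rwa [← Finsupp.notMem_support_iff, Nat.support_factorization]
    rw [Nat.factorization_mul hm hn, Finsupp.add_apply, h0, Nat.add_zero]
  · refine Finset.prod_congr rfl fun p hp => ?_
    have hpm : p ∉ m.primeFactors :=
      Finset.disjoint_right.mp hmn.disjoint_primeFactors hp
    have h0 : m.factorization p = 0 := by
      rwa [← Finsupp.notMem_support_iff, Nat.support_factorization]
    rw [Nat.factorization_mul hm hn, Finsupp.add_apply, h0, Nat.zero_add]

lemma mod_eq_one_iff_dvd_sub {K i : ℕ} (hK : 2 ≤ K) (hi : 1 ≤ i) :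
    i % K = 1 ↔ K ∣ (i - 1) := by
  constructor
  · intro h
    have := Nat.div_add_mod i K
    exact ⟨i / K, by omega⟩
  · rintro ⟨t, ht⟩
    have hit : i = 1 + K * t := by omega
    rw [hit, Nat.add_mul_mod_self_left, Nat.mod_eq_of_lt (by omega)]

lemma lamK_prime_pow_s18 {k p i : ℕ} (hp : p.Prime) (hi : i ≠ 0) :
    lamK k (p ^ i) =
      if i % (k + 1) = 0 then 1 else if i % (k + 1) = 1 then -1 else 0 := by
  rw [lamK, if_neg (pow_ne_zero i hp.pos.ne'),
    Nat.primeFactors_pow p hi, Nat.Prime.primeFactors hp,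
    Finset.prod_singleton, hp.factorization_pow, Finsupp.single_eq_same]

lemma lamKA_eq_mul (k : ℕ) (hk : 1 ≤ k) : lamKA k = moebius * chiK k := by
  rw [IsMultiplicative.eq_iff_eq_on_prime_powers _ (lamKA_mult k) _
    (isMultiplicative_moebius.mul (chiK_mult k))]
  intro p i hp
  rw [mul_apply, Nat.sum_divisorsAntidiagonal (f := fun a b => moebius a * chiK k b),
    Nat.sum_divisors_prime_pow hp]
  rcases Nat.eq_zero_or_pos i with rfl | hi
  · simp [lamKA, lamK, chiK_eq_one k 1 ⟨1, one_pos, one_pow _⟩]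
  have hsub : ({0, 1} : Finset ℕ) ⊆ Finset.range (i + 1) := by
    intro x hx
    simp only [Finset.mem_insert, Finset.mem_singleton] at hx
    rcases hx with rfl | rfl <;> simp [Finset.mem_range] <;> omega
  rw [← Finset.sum_subset hsub (fun x hx hx' => ?_)]
  · rw [Finset.sum_pair (by norm_num : (0:ℕ) ≠ 1)]
    have hdiv : p ^ i / p ^ 1 = p ^ (i - 1) := Nat.pow_div hi hp.pos
    rw [pow_one] at hdiv
    rw [pow_zero, pow_one, Nat.div_one, hdiv, moebius_apply_one,
      moebius_apply_prime hp, chiK_apply_prime_pow hp, chiK_apply_prime_pow hp]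
    show lamKA k (p ^ i) = _
    show lamK k (p ^ i) = _
    rw [lamK_prime_pow_s18 hp hi.ne']
    have hmod := mod_eq_one_iff_dvd_sub (K := k + 1) (by omega) hi
    have hdvd0 : (k + 1) ∣ i ↔ i % (k + 1) = 0 := Nat.dvd_iff_mod_eq_zero
    by_cases h0 : i % (k + 1) = 0
    · have hdvd : (k + 1) ∣ i := hdvd0.2 h0
      have hnd : ¬ (k + 1) ∣ (i - 1) := by
        intro hd
        have h1 : (k + 1) ∣ 1 := by
          have := Nat.dvd_sub hdvd hd
          rwa [Nat.sub_sub_self hi] at this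
        have := Nat.le_of_dvd one_pos h1
        omega
      rw [if_pos h0, if_pos hdvd, if_neg hnd]
      ring
    · by_cases h1 : i % (k + 1) = 1
      · rw [if_neg h0, if_pos h1, if_neg (fun hd => h0 (hdvd0.1 hd)),
          if_pos (hmod.1 h1)]
        ring
      · rw [if_neg h0, if_neg h1, if_neg (fun hd => h0 (hdvd0.1 hd)),
          if_neg (fun hd => h1 (hmod.2 hd))]
        ring
  · -- terms with j ≥ 2 vanish
    have hx2 : 2 ≤ x := by
      simp only [Finset.mem_insert, Finset.mem_singleton] at hx'
      omega
    rw [moebius_apply_prime_pow hp (by omega), if_neg (by omega), zero_mul]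

/-- Rearranging a summatory function of a Dirichlet convolution. -/
lemma sum_Icc_mul_apply (f g : ArithmeticFunction ℤ) (N : ℕ) :
    ∑ n ∈ Icc 1 N, (f * g) n = ∑ b ∈ Icc 1 N, g b * ∑ a ∈ Icc 1 (N / b), f a := by
  simp_rw [mul_apply, Finset.mul_sum]
  rw [Finset.sum_sigma', Finset.sum_sigma']
  refine Finset.sum_nbij' (i := fun x => ⟨x.2.2, x.2.1⟩)
    (j := fun x => ⟨x.1 * x.2, (x.2, x.1)⟩) ?_ ?_ ?_ ?_ ?_
  · rintro ⟨n, a, b⟩ hx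
    simp only [Finset.mem_sigma, Finset.mem_Icc, Nat.mem_divisorsAntidiagonal] at hx ⊢
    obtain ⟨⟨h1n, hnN⟩, hab, hn0⟩ := hx
    have ha : 0 < a := Nat.pos_of_ne_zero (left_ne_zero_of_mul (hab ▸ hn0))
    have hb : 0 < b := Nat.pos_of_ne_zero (right_ne_zero_of_mul (hab ▸ hn0))
    refine ⟨⟨hb, le_trans (Nat.le_mul_of_pos_left b ha) (hab ▸ hnN)⟩, ha, ?_⟩
    rw [Nat.le_div_iff_mul_le hb]
    omega
  · rintro ⟨b, a⟩ hx
    simp only [Finset.mem_sigma, Finset.mem_Icc, Nat.mem_divisorsAntidiagonal] at hx ⊢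
    obtain ⟨⟨h1b, hbN⟩, h1a, haN⟩ := hx
    rw [Nat.le_div_iff_mul_le (by omega)] at haN
    have hab' : b * a ≤ N := by rwa [mul_comm] at haN
    have hpos : 0 < b * a := Nat.mul_pos (by omega) (by omega)
    exact ⟨⟨hpos, hab'⟩, mul_comm a b, hpos.ne'⟩
  · rintro ⟨n, a, b⟩ hx
    simp only [Finset.mem_sigma, Finset.mem_Icc, Nat.mem_divisorsAntidiagonal] at hx
    obtain ⟨-, hab, -⟩ := hx
    simp [← hab, mul_comm]
  · rintro ⟨b, a⟩ hx
    rfl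
  · rintro ⟨n, a, b⟩ hx
    exact mul_comm _ _

/-- Summing over (k+1)-th powers. -/
lemma step2 (k N : ℕ) (S : ℕ → ℤ) (hS : S 0 = 0) :
    ∑ b ∈ Icc 1 N, chiK k b * S (N / b) = ∑ d ∈ Icc 1 N, S (N / d ^ (k + 1)) := by
  classical
  have l1 : ∑ b ∈ Icc 1 N, chiK k b * S (N / b)
      = ∑ b ∈ (Icc 1 N).filter (fun b => ∃ d, 0 < d ∧ d ^ (k + 1) = b), S (N / b) := by
    rw [Finset.sum_filter]
    refine Finset.sum_congr rfl fun b hb => ?_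
    by_cases h : ∃ d, 0 < d ∧ d ^ (k + 1) = b
    · rw [if_pos h, chiK_eq_one _ _ h, one_mul]
    · rw [if_neg h, chiK_eq_zero _ _ h, zero_mul]
  have l2 : ∑ d ∈ Icc 1 N, S (N / d ^ (k + 1))
      = ∑ d ∈ (Icc 1 N).filter (fun d => d ^ (k + 1) ≤ N), S (N / d ^ (k + 1)) := by
    symm
    apply Finset.sum_filter_of_ne
    intro d hd hne
    by_contra hgt
    rw [Nat.div_eq_of_lt (by omega)] at hne
    exact hne hS
  rw [l1, l2]
  symm
  refine Finset.sum_bij (i := fun d _ => d ^ (k + 1)) ?_ ?_ ?_ ?_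
  · intro d hd
    simp only [Finset.mem_filter, Finset.mem_Icc] at hd ⊢
    obtain ⟨⟨h1d, hdN⟩, hpow⟩ := hd
    exact ⟨⟨Nat.one_le_iff_ne_zero.2 (pow_ne_zero _ (by omega)), hpow⟩, d, by omega, rfl⟩
  · intro d1 h1 d2 h2 h
    exact Nat.pow_left_injective (by omega) h
  · intro b hb
    simp only [Finset.mem_filter, Finset.mem_Icc] at hb
    obtain ⟨⟨h1b, hbN⟩, d, hd, rfl⟩ := hb
    have hdd : d ≤ d ^ (k + 1) := Nat.le_self_pow (Nat.succ_ne_zero k) d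
    exact ⟨d, by simp only [Finset.mem_filter, Finset.mem_Icc]; omega, rfl⟩
  · intro d hd
    rfl

theorem lamK_partial_sums_of_mertens
    (hM : ∀ ε : ℝ, 0 < ε → ∃ C : ℝ, ∀ x : ℝ, 1 ≤ x →
      |∑ n ∈ Finset.Icc 1 ⌊x⌋₊, (ArithmeticFunction.moebius n : ℝ)| ≤
        C * x ^ (1 / 2 + ε)) :
    ∀ k : ℕ, 1 ≤ k → ∀ ε : ℝ, 0 < ε → ∃ C : ℝ, ∀ x : ℝ, 1 ≤ x →
      |∑ n ∈ Finset.Icc 1 ⌊x⌋₊, (lamK k n : ℝ)| ≤ C * x ^ (1 / 2 + ε) := by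
  intro k hk ε hε
  obtain ⟨C, hC⟩ := hM ε hε
  set s : ℝ := 1 / 2 + ε with hs_def
  have hs : 0 < s := by rw [hs_def]; linarith
  have hC1 : 1 ≤ C := by
    have h1 := hC 1 le_rfl
    rw [Nat.floor_one, Finset.Icc_self, Finset.sum_singleton, Real.one_rpow, mul_one] at h1
    simpa using h1
  have hC0 : 0 ≤ C := by linarith
  have hks : 1 < ((k : ℝ) + 1) * s := by
    have h2 : (2 : ℝ) ≤ (k : ℝ) + 1 := by
      have : (1 : ℝ) ≤ (k : ℝ) := by exact_mod_cast hk
      linarith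
    have h3 : (1 : ℝ) < 2 * s := by rw [hs_def]; linarith
    have h4 := mul_le_mul_of_nonneg_right h2 hs.le
    linarith
  have hsum : Summable (fun d : ℕ => ((d : ℝ) ^ (((k : ℝ) + 1) * s))⁻¹) :=
    Real.summable_nat_rpow_inv.2 hks
  set K := ∑' d : ℕ, ((d : ℝ) ^ (((k : ℝ) + 1) * s))⁻¹ with hK
  have hKnonneg : 0 ≤ K := tsum_nonneg fun d => by positivity
  refine ⟨C * K, fun x hx => ?_⟩
  set N := ⌊x⌋₊ with hN
  have hx0 : (0 : ℝ) ≤ x := by linarith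
  have hN1 : 1 ≤ N := Nat.le_floor (by exact_mod_cast hx)
  have hNx : (N : ℝ) ≤ x := Nat.floor_le hx0
  have key : ∑ n ∈ Icc 1 N, (lamK k n : ℝ)
      = ∑ d ∈ Icc 1 N, ((∑ a ∈ Icc 1 (N / d ^ (k + 1)), moebius a : ℤ) : ℝ) := by
    have h1 : ∑ n ∈ Icc 1 N, lamK k n
        = ∑ d ∈ Icc 1 N, ∑ a ∈ Icc 1 (N / d ^ (k + 1)), moebius a := by
      calc ∑ n ∈ Icc 1 N, lamK k n = ∑ n ∈ Icc 1 N, (lamKA k) n := rfl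
        _ = ∑ n ∈ Icc 1 N, (moebius * chiK k) n := by rw [lamKA_eq_mul k hk]
        _ = ∑ b ∈ Icc 1 N, chiK k b * ∑ a ∈ Icc 1 (N / b), moebius a :=
            sum_Icc_mul_apply _ _ N
        _ = ∑ d ∈ Icc 1 N, ∑ a ∈ Icc 1 (N / d ^ (k + 1)), moebius a := by
            rw [step2 k N (fun m => ∑ a ∈ Icc 1 m, moebius a) (by simp)]
    calc ∑ n ∈ Icc 1 N, (lamK k n : ℝ)
        = ((∑ n ∈ Icc 1 N, lamK k n : ℤ) : ℝ) := by push_cast; rfl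
      _ = _ := by rw [h1]; push_cast; rfl
  rw [key]
  have hterm : ∀ d ∈ Icc 1 N,
      |((∑ a ∈ Icc 1 (N / d ^ (k + 1)), moebius a : ℤ) : ℝ)|
        ≤ C * x ^ s * ((d : ℝ) ^ (((k : ℝ) + 1) * s))⁻¹ := by
    intro d hd
    simp only [Finset.mem_Icc] at hd
    have hd1 : (1 : ℝ) ≤ (d : ℝ) := by exact_mod_cast hd.1
    by_cases hdN : d ^ (k + 1) ≤ N
    · have hdpos : (0 : ℝ) < (d : ℝ) ^ (k + 1) := by positivity
      have hdx : ((d : ℝ) ^ (k + 1)) ≤ x := by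
        have : ((d ^ (k + 1) : ℕ) : ℝ) ≤ (N : ℝ) := by exact_mod_cast hdN
        push_cast at this
        linarith
      have hy1 : 1 ≤ x / (d : ℝ) ^ (k + 1) := (one_le_div hdpos).2 hdx
      have hfloor : ⌊x / ((d : ℝ) ^ (k + 1))⌋₊ = N / d ^ (k + 1) := by
        rw [hN, show ((d : ℝ) ^ (k + 1)) = ((d ^ (k + 1) : ℕ) : ℝ) by push_cast; ring]
        exact Nat.floor_div_natCast x (d ^ (k + 1))
      have hb := hC (x / (d : ℝ) ^ (k + 1)) hy1
      rw [hfloor] at hb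
      have hcast : ((∑ a ∈ Icc 1 (N / d ^ (k + 1)), moebius a : ℤ) : ℝ)
          = ∑ a ∈ Icc 1 (N / d ^ (k + 1)), ((moebius a : ℤ) : ℝ) := by push_cast; rfl
      rw [hcast]
      refine le_trans hb (le_of_eq ?_)
      have hys : (x / (d : ℝ) ^ (k + 1)) ^ s
          = x ^ s * ((d : ℝ) ^ (((k : ℝ) + 1) * s))⁻¹ := by
        rw [Real.div_rpow hx0 hdpos.le, div_eq_mul_inv]
        congr 1
        rw [← Real.rpow_natCast (d : ℝ) (k + 1), ← Real.rpow_mul (Nat.cast_nonneg d)]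
        congr 1
        push_cast
        ring
      rw [hys, mul_assoc]
    · have h0 : N / d ^ (k + 1) = 0 := Nat.div_eq_of_lt (by omega)
      rw [h0, Finset.Icc_eq_empty (by omega), Finset.sum_empty]
      simp only [Int.cast_zero, abs_zero]
      have : (0:ℝ) ≤ x ^ s := Real.rpow_nonneg hx0 s
      positivity
  calc |∑ d ∈ Icc 1 N, ((∑ a ∈ Icc 1 (N / d ^ (k + 1)), moebius a : ℤ) : ℝ)|
      ≤ ∑ d ∈ Icc 1 N, |((∑ a ∈ Icc 1 (N / d ^ (k + 1)), moebius a : ℤ) : ℝ)| :=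
        Finset.abs_sum_le_sum_abs _ _
    _ ≤ ∑ d ∈ Icc 1 N, C * x ^ s * ((d : ℝ) ^ (((k : ℝ) + 1) * s))⁻¹ :=
        Finset.sum_le_sum hterm
    _ = C * x ^ s * ∑ d ∈ Icc 1 N, ((d : ℝ) ^ (((k : ℝ) + 1) * s))⁻¹ := by
        rw [Finset.mul_sum]
    _ ≤ C * x ^ s * K := by
        refine mul_le_mul_of_nonneg_left ?_ ?_
        · exact Summable.sum_le_tsum _ (fun i _ => by positivity) hsum
        · have : (0:ℝ) ≤ x ^ s := Real.rpow_nonneg hx0 s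
          positivity
    _ = C * K * x ^ s := by ring
end
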